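/- arXiv:1611.01947 — 5 statements merged into one kernel-verified Lean document; each statement's English description precedes it below -/
import Mathlib

section
/- Let S be a nonempty spectrahedron defined by the pencil A(x), let r(A) = min{rank A(x) : x ∈ S} be the minimal rank on S, and let D = {x ∈ ℝ^n : rank A(x) ≤ r(A)}. If C is a connected component of D such that C ∩ S is nonempty, then C ⊆ S. -/
/-!
Let `x ∈ C ∩ S`. Then `A(x)` is positive semidefinite of the minimal rank `r`, hence positive
definite on its range `W`, which has dimension `r`. By compactness of the unit sphere of `W`, every
matrix close to `A(x)` is still positive definite on `W`; if it is moreover symmetric of rank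
`≤ r`, then `W` is complementary to its kernel, so it is positive semidefinite. Thus `S ∩ D` is
open in `D`. Being also closed, it contains every connected component of `D` that it meets.
-/

open Matrix
open Topology Filter

namespace Matrix

variable {ι : Type*} [Fintype ι]

theorem isClosed_setOf_posSemidef : IsClosed {M : Matrix ι ι ℝ | M.PosSemidef} := by
  simp only [posSemidef_iff_dotProduct_mulVec, Set.ofPred_and, Set.ofPred_forall]
  exact (isClosed_eq (by fun_prop) continuous_id).inter
    (isClosed_iInter fun x => isClosed_le continuous_const (by fun_prop))

theorem IsHermitian.posSemidef_of_rank_le_of_pos {M : Matrix ι ι ℝ} (hM : M.IsHermitian)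
    (W : Submodule ℝ (ι → ℝ)) (hrank : M.rank ≤ Module.finrank ℝ W)
    (hpos : ∀ u ∈ W, u ≠ 0 → 0 < u ⬝ᵥ M *ᵥ u) : M.PosSemidef := by
  have hdisj : Disjoint W (LinearMap.ker M.mulVecLin) := by
    refine Submodule.disjoint_def.mpr fun u huW huK => by_contra fun hu => ?_
    simpa [show M *ᵥ u = 0 from huK] using hpos u huW hu
  have hcompl : IsCompl W (LinearMap.ker M.mulVecLin) := by
    refine (Submodule.isCompl_iff_disjoint _ _ ?_).mpr hdisj
    have := M.mulVecLin.finrank_range_add_finrank_ker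
    unfold rank at hrank
    omega
  refine .of_dotProduct_mulVec_nonneg hM fun v => ?_
  obtain ⟨w, hw, k, hk, rfl⟩ :=
    Submodule.mem_sup.mp (hcompl.sup_eq_top ▸ Submodule.mem_top (x := v))
  have hMk : M *ᵥ k = 0 := hk
  have hkMw : k ⬝ᵥ M *ᵥ w = 0 := by
    rw [dotProduct_mulVec, ← mulVec_transpose, isHermitian_iff_isSymm.mp hM, hMk,
      zero_dotProduct]
  rw [star_trivial, mulVec_add, hMk, add_zero, add_dotProduct, hkMw, add_zero]
  rcases eq_or_ne w 0 with rfl | hw0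
  · simp
  · exact (hpos w hw hw0).le

theorem PosSemidef.dotProduct_mulVec_pos_of_mem_range {P : Matrix ι ι ℝ} (hP : P.PosSemidef)
    {u : ι → ℝ} (hu : u ∈ LinearMap.range P.mulVecLin) (hu0 : u ≠ 0) : 0 < u ⬝ᵥ P *ᵥ u := by
  refine (hP.dotProduct_mulVec_nonneg u).lt_of_ne fun h => hu0 ?_
  obtain ⟨v, rfl⟩ := hu
  have hPu : P *ᵥ (P *ᵥ v) = 0 := (hP.dotProduct_mulVec_zero_iff _).mp h.symm
  rw [← dotProduct_self_eq_zero, mulVecLin_apply, dotProduct_mulVec, ← mulVec_transpose,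
    isHermitian_iff_isSymm.mp hP.isHermitian, hPu, zero_dotProduct]

theorem eventually_dotProduct_mulVec_pos {P : Matrix ι ι ℝ} {W : Submodule ℝ (ι → ℝ)}
    (hP : ∀ u ∈ W, u ≠ 0 → 0 < u ⬝ᵥ P *ᵥ u) :
    ∀ᶠ M in 𝓝 P, ∀ u ∈ W, u ≠ 0 → 0 < u ⬝ᵥ M *ᵥ u := by
  have hK : IsCompact ((W : Set (ι → ℝ)) ∩ Metric.sphere 0 1) :=
    (isCompact_sphere 0 1).inter_left (Submodule.closed_of_finiteDimensional W)
  have hsphere : ∀ᶠ M in 𝓝 P, ∀ u ∈ (W : Set (ι → ℝ)) ∩ Metric.sphere 0 1,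
      0 < u ⬝ᵥ M *ᵥ u := by
    refine hK.eventually_forall_of_forall_eventually fun u hu => ?_
    have hcont : Continuous fun z : Matrix ι ι ℝ × (ι → ℝ) => z.2 ⬝ᵥ z.1 *ᵥ z.2 := by
      fun_prop
    exact continuousAt_const.eventually_lt hcont.continuousAt <|
      hP u hu.1 (ne_zero_of_mem_unit_sphere ⟨u, hu.2⟩)
  filter_upwards [hsphere] with M hM u hu hu0
  have hnorm : ‖u‖⁻¹ • u ∈ (W : Set (ι → ℝ)) ∩ Metric.sphere 0 1 :=
    ⟨W.smul_mem _ hu, by simp [norm_smul, hu0]⟩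
  have hscale := hM _ hnorm
  rw [mulVec_smul, smul_dotProduct, dotProduct_smul, smul_smul, smul_eq_mul] at hscale
  exact pos_of_mul_pos_right hscale (by positivity)

theorem PosSemidef.eventually_posSemidef_of_rank_le {P : Matrix ι ι ℝ} (hP : P.PosSemidef) :
    ∀ᶠ M in 𝓝 P, M.IsHermitian → M.rank ≤ P.rank → M.PosSemidef :=
  (eventually_dotProduct_mulVec_pos fun _ => hP.dotProduct_mulVec_pos_of_mem_range).mono
    fun _ hpos hM hrank => hM.posSemidef_of_rank_le_of_pos _ hrank hpos

end Matrix

theorem IsPreconnected.subset_of_isClosed_of_eventually_mem {α : Type*} [TopologicalSpace α]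
    {s t : Set α} (hs : IsPreconnected s) (ht : IsClosed t)
    (hloc : ∀ x ∈ s ∩ t, ∀ᶠ y in 𝓝[s] x, y ∈ t) (hne : (s ∩ t).Nonempty) : s ⊆ t := by
  obtain ⟨x, hxs, hxt⟩ := hne
  refine fun y hys => (hs.induction₂' (fun a b => a ∈ t ↔ b ∈ t) (fun z hz => ?_)
    (fun _ _ _ _ _ _ => Iff.trans) hxs hys).mp hxt
  by_cases hzt : z ∈ t
  · filter_upwards [hloc z ⟨hz, hzt⟩] with y hy
    simp [hzt, hy]
  · filter_upwards [nhdsWithin_le_nhds (ht.isOpen_compl.mem_nhds hzt)] with y hy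
    simp_all

theorem connected_component_min_rank_subset_spectrahedron_general
    (n m : ℕ) (A0 : Matrix (Fin m) (Fin m) ℝ) (A : Fin n → Matrix (Fin m) (Fin m) ℝ)
    (hA0 : A0.IsSymm) (hA : ∀ i, (A i).IsSymm)
    (S : Set (Fin n → ℝ))
    (hS : S = {x | (A0 + ∑ i, x i • A i).PosSemidef})
    (r : ℕ) (hr : IsLeast {k | ∃ x ∈ S, (A0 + ∑ i, x i • A i).rank = k} r)
    (D : Set (Fin n → ℝ)) (hD : D = {x | (A0 + ∑ i, x i • A i).rank ≤ r})
    (C : Set (Fin n → ℝ)) (hC : ∃ x ∈ D, C = connectedComponentIn D x)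
    (hCS : (C ∩ S).Nonempty) :
    C ⊆ S := by
  subst hS hD
  set F : (Fin n → ℝ) → Matrix (Fin m) (Fin m) ℝ := fun x => A0 + ∑ i, x i • A i
  have hF : Continuous F := by fun_prop
  have hFsymm (x : Fin n → ℝ) : (F x).IsHermitian :=
    isHermitian_iff_isSymm.mpr <| hA0.add <|
      Finset.sum_induction _ IsSymm (fun _ _ => IsSymm.add) isSymm_zero fun i _ => (hA i).smul _
  obtain ⟨x₀, -, rfl⟩ := hC
  have hCD := connectedComponentIn_subset {x | (F x).rank ≤ r} x₀
  refine isPreconnected_connectedComponentIn.subset_of_isClosed_of_eventually_mem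
    (isClosed_setOf_posSemidef.preimage hF) (fun x ⟨hxC, hxS⟩ => ?_) hCS
  have hrank : (F x).rank = r := le_antisymm (hCD hxC) (hr.2 ⟨x, hxS, rfl⟩)
  filter_upwards [nhdsWithin_le_nhds (hF.continuousAt.eventually
    hxS.eventually_posSemidef_of_rank_le), self_mem_nhdsWithin] with y hy hyC
  exact hy (hFsymm y) (hrank ▸ hCD hyC)

theorem connected_component_min_rank_subset_spectrahedron
    (n m : ℕ) (A0 : Matrix (Fin m) (Fin m) ℝ) (A : Fin n → Matrix (Fin m) (Fin m) ℝ)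
    (hA0 : A0.IsSymm) (hA : ∀ i, (A i).IsSymm)
    (S : Set (Fin n → ℝ))
    (hS : S = {x | (A0 + ∑ i, x i • A i).PosSemidef})
    (hSne : S.Nonempty)
    (r : ℕ) (hr : IsLeast {k | ∃ x ∈ S, (A0 + ∑ i, x i • A i).rank = k} r)
    (D : Set (Fin n → ℝ)) (hD : D = {x | (A0 + ∑ i, x i • A i).rank ≤ r})
    (C : Set (Fin n → ℝ)) (hC : ∃ x ∈ D, C = connectedComponentIn D x)
    (hCS : (C ∩ S).Nonempty) :
    C ⊆ S :=
  connected_component_min_rank_subset_spectrahedron_general n m A0 A hA0 hA S hS r hr D hD C hC hCS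
end

section
/- With the notation of the minimal-rank theorem: if C is a connected component of D = {x ∈ ℝ^n : rank A(x) ≤ r(A)} with C ∩ S ≠ ∅, then every x ∈ C satisfies rank A(x) = r(A), i.e., C is disjoint from {x : rank A(x) ≤ r(A) - 1}. -/
open Matrix Polynomial Topology Filter Finset

/-! For a real symmetric matrix `N` with eigenvalues `λ`, the polynomial
`(-N).charpoly = det (X + N) = ∏ (X + λᵢ)` has the elementary symmetric functions of `λ` as
coefficients. If `N` is positive semidefinite of rank at least `r`, the coefficients of `X ^ k`
with `m - r ≤ k < m` are positive, hence stay positive near `N`; a nearby symmetric matrix of rank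
at most `r` also has vanishing coefficients below `X ^ (m - r)`, so all its coefficients are
nonnegative and it cannot have a negative eigenvalue. Thus `S ∩ D` is open in `D`; it is also
closed, so it contains every connected component of `D` that it meets, and on `S` the rank is at
least `r(A)`. -/

theorem IsPreconnected.subset_of_isClosed_of_mem_nhdsWithin {X : Type*} [TopologicalSpace X]
    {C S : Set X} (hC : IsPreconnected C) (hS : IsClosed S) (hS_nhds : ∀ x ∈ C ∩ S, S ∈ 𝓝[C] x)
    (hCS : (C ∩ S).Nonempty) : C ⊆ S := by
  obtain ⟨x₀, hx₀C, hx₀S⟩ := hCS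
  intro y hy
  refine (hC.induction₂ (fun a b => a ∈ S ↔ b ∈ S) (fun a ha => ?_) (fun _ _ _ _ _ _ => Iff.trans)
    (fun _ _ _ _ => Iff.symm) hx₀C hy).1 hx₀S
  by_cases haS : a ∈ S
  · filter_upwards [hS_nhds a ⟨ha, haS⟩] with b hb using iff_of_true haS hb
  · filter_upwards [nhdsWithin_le_nhds (hS.isOpen_compl.mem_nhds haS)] with b hb
      using iff_of_false haS hb

theorem Polynomial.Monic.eval_pos_of_coeff_nonneg {R : Type*} [CommSemiring R] [PartialOrder R]
    [IsStrictOrderedRing R] {p : R[X]} (hp : p.Monic) (hcoeff : ∀ k < p.natDegree, 0 ≤ p.coeff k)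
    {t : R} (ht : 0 < t) : 0 < p.eval t := by
  rw [eval_eq_sum_range]
  refine sum_pos' (fun k hk => mul_nonneg ?_ (pow_nonneg ht.le k))
    ⟨p.natDegree, self_mem_range_succ _, by simp [hp.coeff_natDegree, pow_pos ht]⟩
  rcases (mem_range_succ_iff.1 hk).lt_or_eq with hk | rfl
  · exact hcoeff k hk
  · simp [hp.coeff_natDegree]

theorem Polynomial.coeff_prod_X_add_C_eq_zero {R ι : Type*} [CommSemiring R] [DecidableEq R]
    [Fintype ι] (a : ι → R) {k : ℕ} (hk : k + #{i | a i ≠ 0} < Fintype.card ι) :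
    (∏ i, (X + C (a i))).coeff k = 0 := by
  rw [Finset.prod_X_add_C_coeff _ _ (by rw [card_univ]; omega)]
  refine sum_eq_zero fun t ht => ?_
  obtain ⟨i, hit, hi⟩ : ∃ i ∈ t, a i = 0 := by
    by_contra! hne
    have hsub : t ⊆ ({i | a i ≠ 0} : Finset ι) := fun i hi => by simpa using hne i hi
    have := card_le_card hsub
    rw [mem_powersetCard, card_univ] at ht
    omega
  exact prod_eq_zero hit hi

theorem Polynomial.coeff_prod_X_add_C_pos {R ι : Type*} [CommSemiring R] [PartialOrder R]
    [IsStrictOrderedRing R] [DecidableEq R] [Fintype ι] {a : ι → R} (ha : ∀ i, 0 ≤ a i) {k : ℕ}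
    (hk : Fintype.card ι ≤ k + #{i | a i ≠ 0}) (hkι : k ≤ Fintype.card ι) :
    0 < (∏ i, (X + C (a i))).coeff k := by
  rw [Finset.prod_X_add_C_coeff _ _ (by simpa using hkι)]
  obtain ⟨t, hts, htc⟩ := exists_subset_card_eq (s := {i | a i ≠ 0})
    (n := Fintype.card ι - k) (by omega)
  refine sum_pos' (fun s _ => prod_nonneg fun i _ => ha i)
    ⟨t, mem_powersetCard.2 ⟨subset_univ t, by simpa using htc⟩, ?_⟩
  exact prod_pos fun i hi => (ha i).lt_of_ne' (mem_filter.1 (hts hi)).2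

namespace Matrix

variable {n : Type*} [Fintype n]

theorem isClosed_setOf_posSemidef_s5 {R : Type*} [CommRing R] [PartialOrder R] [StarRing R]
    [TopologicalSpace R] [IsTopologicalRing R] [ContinuousStar R] [OrderClosedTopology R] :
    IsClosed {M : Matrix n n R | M.PosSemidef} := by
  simp only [posSemidef_iff_dotProduct_mulVec, Set.ofPred_and, Set.ofPred_forall]
  exact (isClosed_eq continuous_id.matrix_conjTranspose continuous_id).inter
    (isClosed_iInter fun x => isClosed_le continuous_const (by fun_prop))

theorem continuous_charpoly_coeff {R : Type*} [CommRing R] [TopologicalSpace R]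
    [IsTopologicalRing R] [DecidableEq n] (k : ℕ) :
    Continuous fun M : Matrix n n R => M.charpoly.coeff k := by
  have h (M : Matrix n n R) : M.charpoly.coeff k =
      MvPolynomial.eval (fun ij : n × n => M ij.1 ij.2) ((charpoly.univ R n).coeff k) := by
    rw [MvPolynomial.eval, charpoly.univ_coeff_eval₂Hom]
    rfl
  simp_rw [h]
  exact (MvPolynomial.continuous_eval _).comp (by fun_prop)

variable [DecidableEq n] {N : Matrix n n ℝ}

theorem IsHermitian.charpoly_neg (hN : N.IsHermitian) :
    (-N).charpoly = ∏ i, (X + C (hN.eigenvalues i)) := by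
  rw [← cfc_neg_id (R := ℝ) N hN.isSelfAdjoint, hN.charpoly_cfc_eq]
  simp [sub_eq_add_neg]

theorem IsHermitian.rank_eq_card_eigenvalues_ne_zero (hN : N.IsHermitian) :
    N.rank = #{i | hN.eigenvalues i ≠ 0} := by
  rw [hN.rank_eq_card_non_zero_eigs, Fintype.card_subtype]

theorem IsHermitian.coeff_charpoly_neg_eq_zero (hN : N.IsHermitian) {r k : ℕ} (hr : N.rank ≤ r)
    (hk : k + r < Fintype.card n) : (-N).charpoly.coeff k = 0 := by
  rw [hN.charpoly_neg]
  exact coeff_prod_X_add_C_eq_zero _ (by rw [← hN.rank_eq_card_eigenvalues_ne_zero]; omega)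

theorem PosSemidef.coeff_charpoly_neg_pos (hN : N.PosSemidef) {r k : ℕ} (hr : r ≤ N.rank)
    (hk : Fintype.card n ≤ k + r) (hkn : k ≤ Fintype.card n) : 0 < (-N).charpoly.coeff k := by
  rw [hN.isHermitian.charpoly_neg]
  exact coeff_prod_X_add_C_pos hN.eigenvalues_nonneg
    (by rw [← hN.isHermitian.rank_eq_card_eigenvalues_ne_zero]; omega) hkn

theorem IsHermitian.posSemidef_of_coeff_charpoly_neg_nonneg (hN : N.IsHermitian)
    (h : ∀ k < Fintype.card n, 0 ≤ (-N).charpoly.coeff k) : N.PosSemidef := by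
  refine hN.posSemidef_iff_eigenvalues_nonneg.2 fun j => ?_
  by_contra! hj
  have hroot : (-N).charpoly.eval (-hN.eigenvalues j) = 0 := by
    rw [hN.charpoly_neg, eval_prod]
    exact prod_eq_zero (mem_univ j) (by simp)
  have hpos : 0 < (-N).charpoly.eval (-hN.eigenvalues j) :=
    (charpoly_monic _).eval_pos_of_coeff_nonneg (by simpa using h) (neg_pos.2 hj)
  exact hpos.ne' hroot

theorem PosSemidef.eventually_posSemidef (hN : N.PosSemidef) {r : ℕ} (hr : r ≤ N.rank) :
    ∀ᶠ M in 𝓝[{M | M.IsHermitian ∧ M.rank ≤ r}] N, M.PosSemidef := by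
  have hcoeff : ∀ᶠ M in 𝓝 N, ∀ k ∈ Ico (Fintype.card n - r) (Fintype.card n),
      0 < (-M).charpoly.coeff k := by
    refine (eventually_all_finset _).2 fun k hk => ?_
    rw [mem_Ico] at hk
    exact continuousAt_const.eventually_lt
      ((continuous_charpoly_coeff k).comp continuous_neg).continuousAt
      (hN.coeff_charpoly_neg_pos hr (by omega) hk.2.le)
  filter_upwards [nhdsWithin_le_nhds hcoeff, self_mem_nhdsWithin] with M hM ⟨hMH, hMr⟩
  refine hMH.posSemidef_of_coeff_charpoly_neg_nonneg fun k hk => ?_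
  by_cases hkr : k + r < Fintype.card n
  · exact (hMH.coeff_charpoly_neg_eq_zero hMr hkr).ge
  · exact (hM k (mem_Ico.2 ⟨by omega, hk⟩)).le

end Matrix

theorem connected_component_min_rank_constant_rank_general
    (n m : ℕ) (A0 : Matrix (Fin m) (Fin m) ℝ) (A : Fin n → Matrix (Fin m) (Fin m) ℝ)
    (hA0 : A0.IsSymm) (hA : ∀ i, (A i).IsSymm)
    (S : Set (Fin n → ℝ))
    (hS : S = {x | (A0 + ∑ i, x i • A i).PosSemidef})
    (r : ℕ) (hr : IsLeast {k | ∃ x ∈ S, (A0 + ∑ i, x i • A i).rank = k} r)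
    (D : Set (Fin n → ℝ)) (hD : D = {x | (A0 + ∑ i, x i • A i).rank ≤ r})
    (C : Set (Fin n → ℝ)) (hC : ∃ x ∈ D, C = connectedComponentIn D x)
    (hCS : (C ∩ S).Nonempty) :
    ∀ x ∈ C, (A0 + ∑ i, x i • A i).rank = r := by
  subst hS hD
  obtain ⟨x₀, -, rfl⟩ := hC
  set M : (Fin n → ℝ) → Matrix (Fin m) (Fin m) ℝ := fun x => A0 + ∑ i, x i • A i
  have hM : Continuous M := by fun_prop
  have hMH (x : Fin n → ℝ) : (M x).IsHermitian := by
    simp only [M, isHermitian_iff_isSymm, IsSymm, transpose_add, transpose_sum, transpose_smul,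
      hA0.eq, (hA _).eq]
  have hCD := connectedComponentIn_subset {x | (M x).rank ≤ r} x₀
  have hCsubS : connectedComponentIn {x | (M x).rank ≤ r} x₀ ⊆ {x | (M x).PosSemidef} := by
    refine isPreconnected_connectedComponentIn.subset_of_isClosed_of_mem_nhdsWithin
      (isClosed_setOf_posSemidef_s5.preimage hM) (fun x ⟨_, hxS⟩ => ?_) hCS
    have hMD : Set.MapsTo M {x | (M x).rank ≤ r} {N | N.IsHermitian ∧ N.rank ≤ r} :=
      fun y hy => ⟨hMH y, hy⟩
    exact nhdsWithin_mono x hCD ((hM.continuousWithinAt.tendsto_nhdsWithin hMD).eventually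
      (hxS.eventually_posSemidef (hr.2 ⟨x, hxS, rfl⟩)))
  intro x hx
  exact le_antisymm (hCD hx) (hr.2 ⟨x, hCsubS hx, rfl⟩)

theorem connected_component_min_rank_constant_rank
    (n m : ℕ) (A0 : Matrix (Fin m) (Fin m) ℝ) (A : Fin n → Matrix (Fin m) (Fin m) ℝ)
    (hA0 : A0.IsSymm) (hA : ∀ i, (A i).IsSymm)
    (S : Set (Fin n → ℝ))
    (hS : S = {x | (A0 + ∑ i, x i • A i).PosSemidef})
    (hSne : S.Nonempty)
    (r : ℕ) (hr : IsLeast {k | ∃ x ∈ S, (A0 + ∑ i, x i • A i).rank = k} r)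
    (D : Set (Fin n → ℝ)) (hD : D = {x | (A0 + ∑ i, x i • A i).rank ≤ r})
    (C : Set (Fin n → ℝ)) (hC : ∃ x ∈ D, C = connectedComponentIn D x)
    (hCS : (C ∩ S).Nonempty) :
    ∀ x ∈ C, (A0 + ∑ i, x i • A i).rank = r :=
  connected_component_min_rank_constant_rank_general n m A0 A hA0 hA S hS r hr D hD C hC hCS
end

section
/- Let A(x₁) be the 4×4 block-diagonal symmetric matrix with blocks [[1, x₁],[x₁, 2]] and [[2x₁, 2],[2, x₁]]. Then {x₁ ∈ ℝ : A(x₁) ⪰ 0} = {√2}. -/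
/-!
A(x) is block diagonal, so it is positive semidefinite iff both 2 × 2 blocks are. A symmetric
2 × 2 matrix [[a, b], [b, c]] is positive semidefinite iff a, c ≥ 0 and b² ≤ ac. The first block
forces x² ≤ 2, the second x ≥ 0 and x² ≥ 2; together they leave only x = √2.
-/

open Matrix

lemma dotProduct_mulVec_fin_two (a b c : ℝ) (v : Fin 2 → ℝ) :
    star v ⬝ᵥ (!![a, b; b, c] *ᵥ v) = a * (v 0 * v 0) + 2 * b * v 0 * v 1 + c * (v 1 * v 1) := by
  simp [dotProduct, mulVec, Fin.sum_univ_two]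
  ring

lemma isHermitian_fin_two (a b c : ℝ) : (!![a, b; b, c]).IsHermitian := by
  rw [isHermitian_iff_isSymm]
  ext i j
  fin_cases i <;> fin_cases j <;> rfl

lemma posSemidef_fin_two_iff (a b c : ℝ) :
    (!![a, b; b, c]).PosSemidef ↔ 0 ≤ a ∧ 0 ≤ c ∧ b ^ 2 ≤ a * c := by
  simp only [posSemidef_iff_dotProduct_mulVec, dotProduct_mulVec_fin_two, isHermitian_fin_two,
    true_and]
  constructor
  · intro h
    have ha : 0 ≤ a := by simpa using h ![1, 0]
    have hc : 0 ≤ c := by simpa using h ![0, 1]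
    have hdiscr : discrim a (2 * b) c ≤ 0 := discrim_le_zero fun t => by simpa using h ![t, 1]
    refine ⟨ha, hc, ?_⟩
    rw [discrim] at hdiscr
    linarith
  · rintro ⟨ha, hc, hb⟩ v
    rcases ha.eq_or_lt with rfl | ha
    · obtain rfl : b = 0 := by nlinarith
      simpa using mul_nonneg hc (mul_self_nonneg (v 1))
    · refine nonneg_of_mul_nonneg_right ?_ ha
      -- a · q(v) = (a v₀ + b v₁)² + (ac - b²) v₁²
      nlinarith [sq_nonneg (a * v 0 + b * v 1), mul_nonneg (sub_nonneg.2 hb) (mul_self_nonneg (v 1))]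

lemma isHermitian_fin_four_blocks (a b c d e f : ℝ) :
    (!![a, b, 0, 0; b, c, 0, 0; 0, 0, d, e; 0, 0, e, f]).IsHermitian := by
  rw [isHermitian_iff_isSymm]
  ext i j
  fin_cases i <;> fin_cases j <;> rfl

lemma dotProduct_mulVec_fin_four_blocks (a b c d e f : ℝ) (v : Fin 4 → ℝ) :
    star v ⬝ᵥ (!![a, b, 0, 0; b, c, 0, 0; 0, 0, d, e; 0, 0, e, f] *ᵥ v) =
      star ![v 0, v 1] ⬝ᵥ (!![a, b; b, c] *ᵥ ![v 0, v 1]) +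
        star ![v 2, v 3] ⬝ᵥ (!![d, e; e, f] *ᵥ ![v 2, v 3]) := by
  simp [dotProduct, mulVec, Fin.sum_univ_two, Fin.sum_univ_four]
  ring

lemma posSemidef_fin_four_blocks_iff (a b c d e f : ℝ) :
    (!![a, b, 0, 0; b, c, 0, 0; 0, 0, d, e; 0, 0, e, f]).PosSemidef ↔
      (!![a, b; b, c]).PosSemidef ∧ (!![d, e; e, f]).PosSemidef := by
  simp only [posSemidef_iff_dotProduct_mulVec, isHermitian_fin_four_blocks, isHermitian_fin_two,
    true_and, dotProduct_mulVec_fin_four_blocks, dotProduct_mulVec_fin_two]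
  refine ⟨fun h => ⟨fun v => ?_, fun v => ?_⟩, fun ⟨h₁, h₂⟩ v => add_nonneg (h₁ _) (h₂ _)⟩
  · simpa using h ![v 0, v 1, 0, 0]
  · simpa using h ![0, 0, v 0, v 1]

theorem irrational_spectrahedron :
    {x : ℝ | (!![1, x, 0, 0; x, 2, 0, 0; 0, 0, 2 * x, 2; 0, 0, 2, x]).PosSemidef}
      = {Real.sqrt 2} := by
  ext x
  simp only [Set.mem_ofPred_eq, Set.mem_singleton_iff, posSemidef_fin_four_blocks_iff,
    posSemidef_fin_two_iff]
  constructor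
  · rintro ⟨⟨-, -, hx_sq_le⟩, -, hx_nonneg, hx_sq_ge⟩
    rw [eq_comm, Real.sqrt_eq_iff_eq_sq zero_le_two hx_nonneg]
    nlinarith
  · rintro rfl
    have hsq : Real.sqrt 2 * Real.sqrt 2 = 2 := Real.mul_self_sqrt zero_le_two
    exact ⟨⟨zero_le_one, zero_le_two, by nlinarith⟩, by positivity, by positivity, by nlinarith⟩
end

section
/- For every x in the spectrahedron S_n = {x ∈ ℝ^n : [[1,2],[2,x₁]] ⪰ 0, [[1,x₁],[x₁,x₂]] ⪰ 0, ..., [[1,x_{n-1}],[x_{n-1},x_n]] ⪰ 0}, one has x₁ ≥ 4 and x_i ≥ x_{i-1}² for i ≥ 2, and hence x_n ≥ 2^{2^n}. -/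
open Matrix

theorem exponential_bitsize_spectrahedron
    (n : ℕ) (hn : 1 ≤ n) (x : ℕ → ℝ)
    (h1 : (!![1, 2; 2, x 1]).PosSemidef)
    (h2 : ∀ i, 2 ≤ i → i ≤ n → (!![1, x (i - 1); x (i - 1), x i]).PosSemidef) :
    (∀ i, 2 ≤ i → i ≤ n → (x (i - 1)) ^ 2 ≤ x i) ∧ 4 ≤ x 1 ∧ (2 : ℝ) ^ (2 ^ n) ≤ x n := by
  have key : ∀ i, 2 ≤ i → i ≤ n → (x (i - 1)) ^ 2 ≤ x i := by
    intro i hi hin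
    have := (h2 i hi hin).dotProduct_mulVec_nonneg ![x (i - 1), -1]
    simp [Matrix.mulVec, dotProduct, Fin.sum_univ_two] at this
    nlinarith [this]
  have hx1 : 4 ≤ x 1 := by
    have := h1.dotProduct_mulVec_nonneg ![2, -1]
    simp [Matrix.mulVec, dotProduct, Fin.sum_univ_two] at this
    nlinarith [this]
  refine ⟨key, hx1, ?_⟩
  have main : ∀ i, 1 ≤ i → i ≤ n → (2 : ℝ) ^ (2 ^ i) ≤ x i := by
    intro i
    induction i with
    | zero => intro h; omega
    | succ k ih =>
      intro _ hkn
      rcases Nat.eq_or_lt_of_le (Nat.one_le_iff_ne_zero.mpr (Nat.succ_ne_zero k)) with h | h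
      · have hk0 : k = 0 := by omega
        subst hk0
        norm_num
        linarith
      · have hk1 : 1 ≤ k := by omega
        have hkle : k ≤ n := by omega
        have hxk := ih hk1 hkle
        have hsq := key (k + 1) (by omega) (by omega)
        simp only [Nat.add_sub_cancel] at hsq
        have h2k : (0:ℝ) ≤ 2 ^ (2 ^ k) := by positivity
        have : ((2:ℝ) ^ (2 ^ k)) ^ 2 ≤ (x k) ^ 2 := by nlinarith
        calc (2:ℝ) ^ (2 ^ (k + 1)) = ((2:ℝ) ^ (2 ^ k)) ^ 2 := by
              rw [← pow_mul]; ring_nf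
          _ ≤ (x k) ^ 2 := this
          _ ≤ x (k + 1) := hsq
  exact main n hn le_rfl
end

section
/- Let A(x) be the 4×4 symmetric matrix [[1+x₁, x₂, 0, 0],[x₂, 1-x₁, x₂, 0],[0, x₂, 2+x₁, x₂],[0, 0, x₂, 2-x₁]]. Then every x ∈ ℝ² with A(x) ⪰ 0 and det A(x) = 0 satisfies rank A(x) = 3. -/
/-!
The rank is at most 3 because the determinant vanishes. If `x₂ ≠ 0`, rows 0, 1, 2 and columns
1, 2, 3 form a triangular minor equal to `x₂ ^ 3`. If `x₂ = 0`, the matrix is diagonal with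
entries vanishing at the four distinct points `-1, 1, -2, 2`, so exactly one entry is zero.
-/

open Matrix

namespace Matrix

variable {m n k K : Type*} [Field K]

theorem rank_lt_card_of_det_eq_zero [Fintype n] [DecidableEq n] {A : Matrix n n K}
    (h : A.det = 0) : A.rank < Fintype.card n := by
  obtain ⟨v, hv, hAv⟩ := exists_mulVec_eq_zero_iff.mpr h
  have hker : 0 < Module.finrank K (LinearMap.ker A.mulVecLin) :=
    Module.finrank_pos_iff_exists_ne_zero.mpr ⟨⟨v, hAv⟩, fun h0 => hv (congrArg Subtype.val h0)⟩
  have hrank_nullity := LinearMap.finrank_range_add_finrank_ker A.mulVecLin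
  rw [Module.finrank_fintype_fun_eq_card] at hrank_nullity
  rw [rank]
  omega

theorem card_le_rank_of_det_submatrix_ne_zero [Fintype n] [Fintype k] [DecidableEq k]
    {A : Matrix m n K} {r : k → m} {c : k → n} (h : (A.submatrix r c).det ≠ 0) :
    Fintype.card k ≤ A.rank :=
  rank_of_det_ne_zero h ▸ rank_submatrix_le A r c

theorem rank_diagonal_eq_card_sub_one [Fintype m] [DecidableEq m] {w : m → K}
    (h : ∃! i, w i = 0) : (diagonal w).rank = Fintype.card m - 1 := by
  classical
  obtain ⟨i, hi, huniq⟩ := h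
  rw [rank_diagonal, Fintype.card_subtype_compl,
    Fintype.card_eq_one_iff.mpr ⟨⟨i, hi⟩, fun j => Subtype.ext (huniq j j.2)⟩]

end Matrix

theorem quartic_boundary_rank_three_general (x₁ x₂ : ℝ)
    (hdet : (!![1 + x₁, x₂, 0, 0; x₂, 1 - x₁, x₂, 0; 0, x₂, 2 + x₁, x₂; 0, 0, x₂, 2 - x₁]).det = 0) :
    (!![1 + x₁, x₂, 0, 0; x₂, 1 - x₁, x₂, 0; 0, x₂, 2 + x₁, x₂; 0, 0, x₂, 2 - x₁]).rank = 3 := by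
  by_cases hx₂ : x₂ = 0
  · subst hx₂
    have hdiag : !![1 + x₁, 0, 0, 0; 0, 1 - x₁, 0, 0; 0, 0, 2 + x₁, 0; 0, 0, 0, 2 - x₁] =
        diagonal ![1 + x₁, 1 - x₁, 2 + x₁, 2 - x₁] := by
      ext i j; fin_cases i <;> fin_cases j <;> rfl
    rw [hdiag, det_diagonal] at hdet
    rw [hdiag]
    refine rank_diagonal_eq_card_sub_one ?_
    obtain ⟨i, -, hi⟩ := Finset.prod_eq_zero_iff.mp hdet
    refine ⟨i, hi, fun j hj => ?_⟩
    fin_cases i <;> fin_cases j <;>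
      simp only [Fin.isValue, Fin.zero_eta, Fin.mk_one, Fin.reduceFinMk, cons_val_zero,
        cons_val_one, cons_val, Fin.reduceEq, zero_ne_one, one_ne_zero] at hi hj ⊢ <;>
      linarith
  · refine le_antisymm (Nat.le_of_lt_succ (rank_lt_card_of_det_eq_zero hdet)) ?_
    exact card_le_rank_of_det_submatrix_ne_zero (r := ![0, 1, 2]) (c := ![1, 2, 3])
      (by rw [det_fin_three]; simpa)

theorem quartic_boundary_rank_three (x₁ x₂ : ℝ)
    (hpsd : (!![1 + x₁, x₂, 0, 0; x₂, 1 - x₁, x₂, 0; 0, x₂, 2 + x₁, x₂; 0, 0, x₂, 2 - x₁]).PosSemidef)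
    (hdet : (!![1 + x₁, x₂, 0, 0; x₂, 1 - x₁, x₂, 0; 0, x₂, 2 + x₁, x₂; 0, 0, x₂, 2 - x₁]).det = 0) :
    (!![1 + x₁, x₂, 0, 0; x₂, 1 - x₁, x₂, 0; 0, x₂, 2 + x₁, x₂; 0, 0, x₂, 2 - x₁]).rank = 3 :=
  quartic_boundary_rank_three_general x₁ x₂ hdet
end
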